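/- arXiv:1611.03549 — 4 statements merged into one kernel-verified Lean document; each statement's English description precedes it below -/
import Mathlib

section
/- Let A : ℝ^{nN} → ℝ^{nN} satisfy the (p,q)-ellipticity and growth conditions, and assume 1 < p < 2. Then there exists a constant K > 0 such that for all ξ, η ∈ ℝ^{nN} one has (1 + |ξ|² + |η|²)^{(p−2)/2} |ξ − η|² ≤ K Σ_{i=1}^n Σ_{α=1}^N ( A_i^α(ξ) − A_i^α(η) ) (ξ_i^α − η_i^α). -/
open MeasureTheory Real

noncomputable section

abbrev Vec (n N : ℕ) := EuclideanSpace ℝ (Fin n × Fin N)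

abbrev Pt (n : ℕ) := EuclideanSpace ℝ (Fin n)

def dA {n N : ℕ} (A : Vec n N → Vec n N) (ξ : Vec n N)
    (i : Fin n) (α : Fin N) (j : Fin n) (β : Fin N) : ℝ :=
  fderiv ℝ A ξ (EuclideanSpace.single (j, β) 1) (i, α)

structure EllipticGrowth (n N : ℕ) (p q m M : ℝ) (A : Vec n N → Vec n N) : Prop where
  differentiable : Differentiable ℝ A
  ellipticity : ∀ ξ lam : Vec n N,
    m * (1 + ‖ξ‖ ^ 2) ^ ((p - 2) / 2) * ‖lam‖ ^ 2 ≤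
      ∑ i : Fin n, ∑ j : Fin n, ∑ α : Fin N, ∑ β : Fin N,
        dA A ξ i α j β * lam (i, α) * lam (j, β)
  growth : ∀ (ξ : Vec n N) (i : Fin n) (α : Fin N) (j : Fin n) (β : Fin N),
    |dA A ξ i α j β| ≤ M * (1 + ‖ξ‖ ^ 2) ^ ((q - 2) / 2)

def SkewControl (n N : ℕ) (p q M : ℝ) (A : Vec n N → Vec n N) : Prop :=
  ∀ (ξ : Vec n N) (i : Fin n) (α : Fin N) (j : Fin n) (β : Fin N),
    |dA A ξ i α j β - dA A ξ j β i α| ≤ M * (1 + ‖ξ‖ ^ 2) ^ ((q + p - 4) / 4)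

def grad {n N : ℕ} (u : Pt n → EuclideanSpace ℝ (Fin N)) (x : Pt n) : Vec n N :=
  (WithLp.equiv 2 ((Fin n × Fin N) → ℝ)).symm
    fun iα => fderiv ℝ u x (EuclideanSpace.single iα.1 1) iα.2

def hessSq {n N : ℕ} (u : Pt n → EuclideanSpace ℝ (Fin N)) (x : Pt n) : ℝ :=
  ∑ i : Fin n, ∑ k : Fin n, ∑ α : Fin N,
    (fderiv ℝ (fun y => fderiv ℝ u y (EuclideanSpace.single i 1) α) x
      (EuclideanSpace.single k 1)) ^ 2

def IsWeakSolution {n N : ℕ} (A : Vec n N → Vec n N) (Ω : Set (Pt n))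
    (u : Pt n → EuclideanSpace ℝ (Fin N)) : Prop :=
  ∀ φ : Pt n → EuclideanSpace ℝ (Fin N),
    ContDiff ℝ (⊤ : ℕ∞) φ → HasCompactSupport φ → tsupport φ ⊆ Ω →
    ∫ x in Ω, ∑ i : Fin n, ∑ α : Fin N,
      A (grad u x) (i, α) * fderiv ℝ φ x (EuclideanSpace.single i 1) α = 0

def Vmap {n N : ℕ} (p : ℝ) (ξ : Vec n N) : Vec n N := ((1 + ‖ξ‖ ^ 2) ^ ((p - 2) / 4)) • ξ

def gradVSq {n N : ℕ} (p : ℝ) (u : Pt n → EuclideanSpace ℝ (Fin N)) (x : Pt n) : ℝ :=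
  ∑ k : Fin n, ‖fderiv ℝ (fun y => Vmap p (grad u y)) x (EuclideanSpace.single k 1)‖ ^ 2

def Aeps {n N : ℕ} (q ε : ℝ) (A : Vec n N → Vec n N) (ξ : Vec n N) : Vec n N :=
  A ξ + (ε * (1 + ‖ξ‖ ^ 2) ^ ((max q 2 - 2) / 2)) • ξ


set_option maxHeartbeats 1000000 in
/-- Lemma 2.1, inequality (2.4): monotonicity for 1 < p < 2. -/
theorem statement7 {n N : ℕ} (hn : 1 ≤ n) (hN : 1 ≤ N) {p q m M : ℝ}
    (hp : 1 < p) (hpq : p ≤ q) (hm : 0 < m) (hM : 0 < M) (hp2 : p < 2)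
    (A : Vec n N → Vec n N) (hA : EllipticGrowth n N p q m M A) :
    ∃ K > 0, ∀ ξ η : Vec n N,
      (1 + ‖ξ‖ ^ 2 + ‖η‖ ^ 2) ^ ((p - 2) / 2) * ‖ξ - η‖ ^ 2 ≤
        K * ∑ i : Fin n, ∑ α : Fin N,
          (A ξ (i, α) - A η (i, α)) * (ξ (i, α) - η (i, α)) := by
  have hK : (0:ℝ) < (8:ℝ) ^ ((2 - p) / 2) / m := by positivity
  refine ⟨(8:ℝ) ^ ((2 - p) / 2) / m, hK, ?_⟩
  intro ξ η
  set e : ℝ := (p - 2) / 2 with he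
  set D : Vec n N := ξ - η with hDdef
  set S : ℝ := 1 + ‖ξ‖ ^ 2 + ‖η‖ ^ 2 with hSdef
  have hS1 : (1:ℝ) ≤ S := by
    have := sq_nonneg ‖ξ‖; have := sq_nonneg ‖η‖; simp only [hSdef]; nlinarith
  have hSpos : (0:ℝ) < S := lt_of_lt_of_le one_pos hS1
  -- the segment
  set c : ℝ → Vec n N := fun t => η + t • D with hcdef
  have hc0 : c 0 = η := by
    show η + (0:ℝ) • D = η
    rw [zero_smul, add_zero]
  have hc1 : c 1 = ξ := by
    show η + (1:ℝ) • D = ξ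
    rw [one_smul, hDdef]; abel
  have hcder : ∀ t : ℝ, HasDerivAt c D t := by
    intro t
    have h1 : HasDerivAt (fun t : ℝ => t • D) ((1:ℝ) • D) t :=
      (hasDerivAt_id t).smul_const D
    have h2 := h1.const_add η
    rw [one_smul] at h2
    exact h2
  -- decomposition of D in the standard basis
  have hdecomp : D = ∑ jβ : Fin n × Fin N, D jβ • EuclideanSpace.single jβ 1 := by
    ext kγ
    rw [WithLp.ofLp_sum, Finset.sum_apply]
    simp [EuclideanSpace.single_apply]
  -- coordinate formula for the directional derivative
  have happ : ∀ (ξ' : Vec n N) (iα : Fin n × Fin N),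
      (fderiv ℝ A ξ' D) iα
        = ∑ jβ : Fin n × Fin N, dA A ξ' iα.1 iα.2 jβ.1 jβ.2 * D jβ := by
    intro ξ' iα
    have hL : (fderiv ℝ A ξ' D) iα
        = (EuclideanSpace.proj iα ∘L fderiv ℝ A ξ') D := rfl
    have hmap : (EuclideanSpace.proj iα ∘L fderiv ℝ A ξ') D
        = ∑ jβ : Fin n × Fin N, D jβ •
            ((EuclideanSpace.proj iα ∘L fderiv ℝ A ξ') (EuclideanSpace.single jβ 1)) := by
      conv_lhs => rw [hdecomp]
      rw [map_sum]
      exact Finset.sum_congr rfl fun jβ _ => _root_.map_smul _ _ _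
    rw [hL, hmap]
    refine Finset.sum_congr rfl fun jβ _ => ?_
    rw [smul_eq_mul, mul_comm]
    rfl
  set F : ℝ → ℝ := fun t => ∑ iα : Fin n × Fin N, A (c t) iα * D iα with hFdef
  set F' : ℝ → ℝ := fun t => ∑ iα : Fin n × Fin N, (fderiv ℝ A (c t) D) iα * D iα
    with hF'def
  have hFder : ∀ t : ℝ, HasDerivAt F (F' t) t := by
    intro t
    refine HasDerivAt.fun_sum fun iα _ => ?_
    have h1 : HasDerivAt (fun s => A (c s)) (fderiv ℝ A (c t) D) t :=
      (hA.differentiable (c t)).hasFDerivAt.comp_hasDerivAt t (hcder t)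
    have h2 := (EuclideanSpace.proj iα).hasFDerivAt.comp_hasDerivAt t h1
    have h3 : HasDerivAt (fun s => A (c s) iα) ((fderiv ℝ A (c t) D) iα) t := by
      exact h2
    exact h3.mul_const (D iα)
  -- the ellipticity lower bound on F'
  have hF'lb : ∀ t : ℝ,
      m * (1 + ‖c t‖ ^ 2) ^ e * ‖D‖ ^ 2 ≤ F' t := by
    intro t
    have hell := hA.ellipticity (c t) D
    have hsum : (∑ i : Fin n, ∑ j : Fin n, ∑ α : Fin N, ∑ β : Fin N,
        dA A (c t) i α j β * D (i, α) * D (j, β)) = F' t := by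
      calc (∑ i : Fin n, ∑ j : Fin n, ∑ α : Fin N, ∑ β : Fin N,
            dA A (c t) i α j β * D (i, α) * D (j, β))
          = ∑ i : Fin n, ∑ α : Fin N, ∑ j : Fin n, ∑ β : Fin N,
            dA A (c t) i α j β * D (j, β) * D (i, α) := by
            refine Finset.sum_congr rfl fun i _ => ?_
            rw [Finset.sum_comm]
            refine Finset.sum_congr rfl fun α _ => Finset.sum_congr rfl fun j _ =>
              Finset.sum_congr rfl fun β _ => by ring
        _ = ∑ iα : Fin n × Fin N, ∑ jβ : Fin n × Fin N,
            dA A (c t) iα.1 iα.2 jβ.1 jβ.2 * D jβ * D iα := by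
            rw [Fintype.sum_prod_type]
            refine Finset.sum_congr rfl fun i _ => ?_
            refine Finset.sum_congr rfl fun α _ => ?_
            rw [Fintype.sum_prod_type]
        _ = F' t := by
            simp only [hF'def]
            refine Finset.sum_congr rfl fun iα _ => ?_
            rw [happ (c t) iα, Finset.sum_mul]
    rw [hsum] at hell
    exact hell
  -- uniform lower bound on [0,1]
  set cst : ℝ := m * ((8:ℝ) ^ e * S ^ e) * ‖D‖ ^ 2 with hcst
  have hF'cst : ∀ t ∈ Set.Icc (0:ℝ) 1, cst ≤ F' t := by
    intro t ht
    refine le_trans ?_ (hF'lb t)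
    have hct : ‖c t‖ ≤ ‖η‖ + ‖D‖ := by
      calc ‖c t‖ ≤ ‖η‖ + ‖t • D‖ := norm_add_le _ _
        _ = ‖η‖ + |t| * ‖D‖ := by rw [norm_smul, Real.norm_eq_abs]
        _ ≤ ‖η‖ + 1 * ‖D‖ := by
            have : |t| ≤ 1 := abs_le.2 ⟨by linarith [ht.1], ht.2⟩
            nlinarith [norm_nonneg D]
        _ = ‖η‖ + ‖D‖ := by ring
    have hDle : ‖D‖ ≤ ‖ξ‖ + ‖η‖ := by rw [hDdef]; exact norm_sub_le _ _
    have hb : 1 + ‖c t‖ ^ 2 ≤ 8 * S := by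
      have h1 : ‖c t‖ ^ 2 ≤ (‖η‖ + ‖D‖) ^ 2 := by
        have := norm_nonneg (c t); nlinarith
      have h2 : (‖η‖ + ‖D‖) ^ 2 ≤ (‖ξ‖ + 2 * ‖η‖) ^ 2 := by
        have := norm_nonneg η; have := norm_nonneg D; nlinarith
      simp only [hSdef]
      nlinarith [sq_nonneg (‖ξ‖ - 2 * ‖η‖), sq_nonneg ‖ξ‖, sq_nonneg ‖η‖]
    have hrw : ((8:ℝ) * S) ^ e = (8:ℝ) ^ e * S ^ e :=
      Real.mul_rpow (by norm_num) (le_of_lt hSpos)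
    have hmono : ((8:ℝ) * S) ^ e ≤ (1 + ‖c t‖ ^ 2) ^ e := by
      refine Real.rpow_le_rpow_of_nonpos ?_ hb ?_
      · positivity
      · rw [he]; linarith
    rw [hcst, ← hrw]
    exact mul_le_mul_of_nonneg_right (mul_le_mul_of_nonneg_left hmono hm.le) (sq_nonneg _)
  -- MVT: F 1 - F 0 ≥ cst
  have hmvt : cst ≤ F 1 - F 0 := by
    set H : ℝ → ℝ := fun t => F t - cst * t with hHdef
    have hHder : ∀ t : ℝ, HasDerivAt H (F' t - cst) t := by
      intro t
      have h : HasDerivAt (fun s : ℝ => cst * s) cst t := by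
        simpa using (hasDerivAt_id t).const_mul cst
      exact (hFder t).sub h
    have hmono : MonotoneOn H (Set.Icc 0 1) := by
      refine monotoneOn_of_deriv_nonneg (convex_Icc 0 1)
        (fun t _ => (hHder t).continuousAt.continuousWithinAt)
        (fun t ht => ((hHder t).differentiableAt).differentiableWithinAt)
        (fun t ht => ?_)
      rw [(hHder t).deriv]
      rw [interior_Icc] at ht
      have := hF'cst t ⟨le_of_lt ht.1, le_of_lt ht.2⟩
      linarith
    have := hmono (Set.left_mem_Icc.2 zero_le_one) (Set.right_mem_Icc.2 zero_le_one)
      zero_le_one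
    simp only [hHdef] at this
    linarith
  -- identify F 1 - F 0 with the double sum
  have hsum2 : F 1 - F 0 = ∑ i : Fin n, ∑ α : Fin N,
      (A ξ (i, α) - A η (i, α)) * (ξ (i, α) - η (i, α)) := by
    simp only [hFdef, hc0, hc1, ← Finset.sum_sub_distrib]
    rw [Fintype.sum_prod_type]
    refine Finset.sum_congr rfl fun i _ => Finset.sum_congr rfl fun α _ => ?_
    have hDval : D (i, α) = ξ (i, α) - η (i, α) := by
      rw [hDdef]; rfl
    rw [hDval]; ring
  have hRHS : cst ≤ ∑ i : Fin n, ∑ α : Fin N,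
      (A ξ (i, α) - A η (i, α)) * (ξ (i, α) - η (i, α)) := hsum2 ▸ hmvt
  -- conclude
  have h8 : (8:ℝ) ^ ((2 - p) / 2) * (8:ℝ) ^ e = 1 := by
    rw [he, ← Real.rpow_add (by norm_num : (0:ℝ) < 8)]
    have hz : (2 - p) / 2 + (p - 2) / 2 = 0 := by ring
    rw [hz, Real.rpow_zero]
  have hfinal : S ^ e * ‖D‖ ^ 2 = ((8:ℝ) ^ ((2 - p) / 2) / m) * cst := by
    rw [hcst]
    field_simp
    linear_combination (-(‖D‖ ^ 2)) * h8
  calc S ^ e * ‖D‖ ^ 2 = ((8:ℝ) ^ ((2 - p) / 2) / m) * cst := hfinal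
    _ ≤ _ := mul_le_mul_of_nonneg_left hRHS (le_of_lt hK)
end
end

section
/- Let A : ℝ^{nN} → ℝ^{nN} satisfy the (p,q)-ellipticity and growth conditions and the skew-symmetry control. Then there exists a constant K > 0 such that for all ξ, η, ζ ∈ ℝ^{nN} one has (m/2)(1+|ζ|²)^{(p−2)/2}|ξ|² ≤ Σ_{i,j=1}^n Σ_{α,β=1}^N (∂A_i^α/∂ζ_j^β)(ζ) (ξ_i^α − η_i^α) ξ_j^β + K (1+|ζ|²)^{(q−2)/2} |η|². -/
open MeasureTheory Real

noncomputable section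

private lemma quad_eq' {n N : ℕ} (a : Fin n → Fin N → Fin n → Fin N → ℝ)
    (x y : Fin n × Fin N → ℝ) :
    (∑ i : Fin n, ∑ j : Fin n, ∑ α : Fin N, ∑ β : Fin N, a i α j β * x (i,α) * y (j,β))
      = ∑ u : Fin n × Fin N, ∑ v : Fin n × Fin N, a u.1 u.2 v.1 v.2 * x u * y v := by
  simp only [Fintype.sum_prod_type]
  exact Finset.sum_congr rfl fun i _ => Finset.sum_comm ..

private lemma sum_abs_bound' {ι : Type*} [Fintype ι] (a : ι → ι → ℝ) (x y : ι → ℝ)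
    (C X Y : ℝ) (hC : ∀ u v, |a u v| ≤ C) (hX : ∀ u, |x u| ≤ X) (hY : ∀ u, |y u| ≤ Y) :
    (∑ u, ∑ v, a u v * x u * y v) ≤ (Fintype.card ι : ℝ)^2 * C * X * Y := by
  by_cases hι : Nonempty ι
  · have hC0 : 0 ≤ C := le_trans (abs_nonneg _) (hC (Classical.arbitrary ι) (Classical.arbitrary ι))
    have hX0 : 0 ≤ X := le_trans (abs_nonneg _) (hX (Classical.arbitrary ι))
    calc (∑ u, ∑ v, a u v * x u * y v) ≤ ∑ u : ι, ∑ v : ι, C * X * Y := by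
          apply Finset.sum_le_sum; intro u _
          apply Finset.sum_le_sum; intro v _
          calc a u v * x u * y v ≤ |a u v * x u * y v| := le_abs_self _
            _ = |a u v| * |x u| * |y v| := by rw [abs_mul, abs_mul]
            _ ≤ C * X * Y := by
                exact mul_le_mul (mul_le_mul (hC u v) (hX u) (abs_nonneg _) hC0)
                  (hY v) (abs_nonneg _) (mul_nonneg hC0 hX0)
      _ = (Fintype.card ι : ℝ)^2 * C * X * Y := by
          simp [Finset.sum_const, Finset.card_univ]; ring
  · simp [not_nonempty_iff.mp hι, Finset.univ_eq_empty]

private lemma coord_le_norm' {ι : Type*} [Fintype ι] (x : EuclideanSpace ℝ ι) (u : ι) :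
    |x u| ≤ ‖x‖ := by
  rw [EuclideanSpace.norm_eq]
  rw [show |x u| = Real.sqrt (|x u|^2) by rw [Real.sqrt_sq_eq_abs, abs_abs]]
  apply Real.sqrt_le_sqrt
  have := Finset.single_le_sum (f := fun v => ‖x v‖^2) (fun v _ => sq_nonneg _)
    (Finset.mem_univ u)
  simpa [sq_abs] using this


/-- Lemma 2.2, inequality (2.5). -/
theorem statement8 {n N : ℕ} (hn : 1 ≤ n) (hN : 1 ≤ N) {p q m M : ℝ}
    (hp : 1 < p) (hpq : p ≤ q) (hm : 0 < m) (hM : 0 < M)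
    (A : Vec n N → Vec n N) (hA : EllipticGrowth n N p q m M A)
    (hskew : SkewControl n N p q M A) :
    ∃ K > 0, ∀ ξ η ζ : Vec n N,
      m / 2 * (1 + ‖ζ‖ ^ 2) ^ ((p - 2) / 2) * ‖ξ‖ ^ 2 ≤
        (∑ i : Fin n, ∑ j : Fin n, ∑ α : Fin N, ∑ β : Fin N,
          dA A ζ i α j β * (ξ (i, α) - η (i, α)) * ξ (j, β)) +
        K * (1 + ‖ζ‖ ^ 2) ^ ((q - 2) / 2) * ‖η‖ ^ 2 := by
  have hn' : (0:ℝ) < n := by exact_mod_cast Nat.lt_of_lt_of_le Nat.zero_lt_one hn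
  have hN' : (0:ℝ) < N := by exact_mod_cast Nat.lt_of_lt_of_le Nat.zero_lt_one hN
  set c : ℝ := ((n:ℝ) * N)^2 with hc
  have hc0 : 0 < c := by positivity
  set c2h : ℝ := (1/2) * c * M with hc2h
  have hc2h0 : 0 < c2h := by positivity
  obtain ⟨d, hd0, hd⟩ : ∃ d : ℝ, 0 ≤ d ∧ c2h^2 = m * d :=
    ⟨c2h^2 / m, by positivity, by field_simp⟩
  refine ⟨c * M + d, by positivity, ?_⟩
  intro ξ η ζ
  have h1s : (0:ℝ) < 1 + ‖ζ‖^2 := by positivity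
  set s : ℝ := ‖ζ‖^2 with hs
  set a : Fin n × Fin N → Fin n × Fin N → ℝ := fun u v => dA A ζ u.1 u.2 v.1 v.2 with ha
  set tp : ℝ := (1+s)^((p-2)/2) with htpdef
  set tq : ℝ := (1+s)^((q-2)/2) with htqdef
  set tmid : ℝ := (1+s)^((q+p-4)/4) with htmiddef
  -- ellipticity in pair form
  have hell : ∀ lam : Vec n N,
      m * tp * ‖lam‖^2 ≤ ∑ u, ∑ v, a u v * lam u * lam v := by
    intro lam
    have := hA.ellipticity ζ lam
    rwa [quad_eq' (fun i α j β => dA A ζ i α j β) (fun u => lam u) (fun u => lam u)] at this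
  have hpos : ∀ z : Fin n × Fin N → ℝ, 0 ≤ ∑ u, ∑ v, a u v * z u * z v := by
    intro z
    refine le_trans ?_ (hell ((WithLp.equiv 2 _).symm z))
    have : (0:ℝ) ≤ m * tp * ‖(WithLp.equiv 2 ((Fin n × Fin N) → ℝ)).symm z‖^2 := by
      have htp0 : (0:ℝ) ≤ tp := Real.rpow_nonneg h1s.le _
      positivity
    exact this
  have hg : ∀ u v, |a u v| ≤ M * tq := fun u v => hA.growth ζ u.1 u.2 v.1 v.2
  have hsk : ∀ u v, |a u v - a v u| ≤ M * tmid := fun u v => hskew ζ u.1 u.2 v.1 v.2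
  have hcard : ((Fintype.card (Fin n × Fin N) : ℕ) : ℝ) = (n:ℝ) * N := by simp
  -- notation for the bilinear sums
  set Bxx : ℝ := ∑ u, ∑ v, a u v * ξ u * ξ v with hBxx
  set Bxy : ℝ := ∑ u, ∑ v, a u v * ξ u * η v with hBxy
  set Byx : ℝ := ∑ u, ∑ v, a u v * η u * ξ v with hByx
  set Byy : ℝ := ∑ u, ∑ v, a u v * η u * η v with hByy
  -- goal sum equals Bxx - Byx
  have e1 : (∑ i : Fin n, ∑ j : Fin n, ∑ α : Fin N, ∑ β : Fin N,
      dA A ζ i α j β * (ξ (i, α) - η (i, α)) * ξ (j, β))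
      = ∑ u, ∑ v, a u v * (ξ u - η u) * ξ v :=
    quad_eq' (fun i α j β => dA A ζ i α j β) (fun w => ξ w - η w) (fun w => ξ w)
  have e2 : (∑ u, ∑ v, a u v * (ξ u - η u) * ξ v) = Bxx - Byx := by
    rw [hBxx, hByx, ← Finset.sum_sub_distrib]
    refine Finset.sum_congr rfl fun u _ => ?_
    rw [← Finset.sum_sub_distrib]
    exact Finset.sum_congr rfl fun v _ => by ring
  -- symmetric part bound from positivity
  have e3 : (∑ u, ∑ v, a u v * (ξ u/2 - η u) * (ξ v/2 - η v))
      = (1/4) * Bxx - (1/2) * Bxy - (1/2) * Byx + Byy := by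
    rw [hBxx, hBxy, hByx, hByy]
    simp only [Finset.mul_sum, ← Finset.sum_sub_distrib, ← Finset.sum_add_distrib]
    exact Finset.sum_congr rfl fun u _ => Finset.sum_congr rfl fun v _ => by ring
  have hsym : 0 ≤ (1/4) * Bxx - (1/2) * Bxy - (1/2) * Byx + Byy := by
    rw [← e3]; exact hpos _
  -- skew part
  have hswap : Bxy = ∑ u, ∑ v, a v u * η u * ξ v := by
    rw [hBxy, Finset.sum_comm]
    exact Finset.sum_congr rfl fun u _ => Finset.sum_congr rfl fun v _ => by ring
  have hdiff : Byx - Bxy = ∑ u, ∑ v, (a u v - a v u) * η u * ξ v := by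
    rw [hswap, hByx, ← Finset.sum_sub_distrib]
    refine Finset.sum_congr rfl fun u _ => ?_
    rw [← Finset.sum_sub_distrib]
    exact Finset.sum_congr rfl fun v _ => by ring
  have hskewbd : Byx - Bxy ≤ c * (M * tmid) * ‖η‖ * ‖ξ‖ := by
    rw [hdiff]
    have := sum_abs_bound' (fun u v => a u v - a v u) (fun u => η u) (fun u => ξ u)
      (M * tmid) ‖η‖ ‖ξ‖ hsk (fun u => coord_le_norm' η u) (fun u => coord_le_norm' ξ u)
    rwa [hcard, ← hc] at this
  have hByybd : Byy ≤ c * (M * tq) * ‖η‖ * ‖η‖ := by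
    have := sum_abs_bound' a (fun u => η u) (fun u => η u)
      (M * tq) ‖η‖ ‖η‖ hg (fun u => coord_le_norm' η u) (fun u => coord_le_norm' η u)
    rwa [hcard, ← hc] at this
  -- Young's inequality for the skew term
  have htp4 : (1+s)^((p-2)/4) * (1+s)^((p-2)/4) = tp := by
    rw [← Real.rpow_add h1s, htpdef]; ring_nf
  have htq4 : (1+s)^((q-2)/4) * (1+s)^((q-2)/4) = tq := by
    rw [← Real.rpow_add h1s, htqdef]; ring_nf
  have htmid4 : tmid = (1+s)^((p-2)/4) * (1+s)^((q-2)/4) := by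
    rw [← Real.rpow_add h1s, htmiddef]; ring_nf
  set aa : ℝ := (1+s)^((p-2)/4) * ‖ξ‖ with haa
  set bb : ℝ := c2h * ((1+s)^((q-2)/4) * ‖η‖) with hbb
  have hyoung : c2h * tmid * ‖η‖ * ‖ξ‖ ≤ m/4 * (tp * ‖ξ‖^2) + d * (tq * ‖η‖^2) := by
    have hb2 : bb^2 = m * d * ((1+s)^((q-2)/4) * ‖η‖)^2 := by
      rw [hbb]; rw [mul_pow]; rw [hd]
    have key : m * (m/4 * aa^2 + d * ((1+s)^((q-2)/4) * ‖η‖)^2) - m * (aa * bb)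
        = (m/2 * aa - bb)^2 := by linear_combination hb2 - 2 * ((1+s)^((q-2)/4) * ‖η‖)^2 * hd
    have h2 : m * (aa * bb) ≤ m * (m/4 * aa^2 + d * ((1+s)^((q-2)/4) * ‖η‖)^2) := by
      linarith [sq_nonneg (m/2 * aa - bb)]
    have h3 : aa * bb ≤ m/4 * aa^2 + d * ((1+s)^((q-2)/4) * ‖η‖)^2 :=
      le_of_mul_le_mul_left (by linarith) hm
    calc c2h * tmid * ‖η‖ * ‖ξ‖ = aa * bb := by rw [haa, hbb, htmid4]; ring
      _ ≤ m/4 * aa^2 + d * ((1+s)^((q-2)/4) * ‖η‖)^2 := h3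
      _ = m/4 * (tp * ‖ξ‖^2) + d * (tq * ‖η‖^2) := by
          have ha2 : aa^2 = tp * ‖ξ‖^2 := by rw [haa, ← htp4]; ring
          have hcc2 : ((1+s)^((q-2)/4) * ‖η‖)^2 = tq * ‖η‖^2 := by rw [← htq4]; ring
          rw [ha2, hcc2]
  -- assemble
  rw [e1, e2]
  have hellx := hell ξ
  rw [← hBxx] at hellx
  have hKexp : (c * M + d) * tq * ‖η‖^2 = c * (M * tq) * ‖η‖ * ‖η‖ + d * (tq * ‖η‖^2) := by
    ring
  have hc2heq : c2h * tmid * ‖η‖ * ‖ξ‖ = (1/2) * (c * (M * tmid) * ‖η‖ * ‖ξ‖) := by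
    rw [hc2h]; ring
  linarith [hellx, hsym, hskewbd, hByybd, hyoung, hKexp, hc2heq]
end
end

section
/- Let A : ℝ^{nN} → ℝ^{nN} satisfy the (p,q)-ellipticity and growth conditions. Then there exists a constant λ > 0, independent of ε, such that for every ε ∈ (0,1) and every ξ ∈ ℝ^{nN} the perturbed map A_ε satisfies Σ_{i=1}^n Σ_{α=1}^N A_{ε,i}^α(ξ) ξ_i^α ≥ ε |ξ|^{max{q,2}} − λ. -/
open MeasureTheory Real

noncomputable section

/- ---------- auxiliary lemmas ---------- -/

lemma inner_eq_sum_prod {n N : ℕ} (w ξ : Vec n N) :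
    (inner ℝ w ξ : ℝ) = ∑ iα : Fin n × Fin N, w iα * ξ iα := by
  rw [PiLp.inner_apply]
  simp [RCLike.inner_apply, mul_comm]

lemma sum_sum_eq_inner {n N : ℕ} (w ξ : Vec n N) :
    ∑ i : Fin n, ∑ α : Fin N, w (i, α) * ξ (i, α) = (inner ℝ w ξ : ℝ) := by
  rw [inner_eq_sum_prod]
  simp only [Fintype.sum_prod_type]

lemma aux_core {n N : ℕ} {p q m M : ℝ}
    (A : Vec n N → Vec n N) (hA : EllipticGrowth n N p q m M A) (η ξ : Vec n N) :
    m * (1 + ‖η‖ ^ 2) ^ ((p - 2) / 2) * ‖ξ‖ ^ 2 ≤ (inner ℝ ((fderiv ℝ A η) ξ) ξ : ℝ) := by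
  set D := fderiv ℝ A η with hD
  have hξ : ∑ jβ : Fin n × Fin N, ξ jβ • EuclideanSpace.single jβ (1:ℝ) = ξ := by
    have := (EuclideanSpace.basisFun (Fin n × Fin N) ℝ).sum_repr ξ
    simpa [EuclideanSpace.basisFun_repr, EuclideanSpace.basisFun_apply] using this
  have hDξ : D ξ = ∑ jβ : Fin n × Fin N, ξ jβ • D (EuclideanSpace.single jβ (1:ℝ)) := by
    conv_lhs => rw [← hξ]
    rw [map_sum]
    simp
  have expand : (inner ℝ (D ξ) ξ : ℝ)
      = ∑ i : Fin n, ∑ j : Fin n, ∑ α : Fin N, ∑ β : Fin N,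
          dA A η i α j β * ξ (i, α) * ξ (j, β) := by
    have step1 : (inner ℝ (D ξ) ξ : ℝ)
        = ∑ iα : Fin n × Fin N, ∑ jβ : Fin n × Fin N,
            dA A η iα.1 iα.2 jβ.1 jβ.2 * ξ iα * ξ jβ := by
      calc (inner ℝ (D ξ) ξ : ℝ)
          = ∑ jβ : Fin n × Fin N,
              (inner ℝ ((ξ jβ • D (EuclideanSpace.single jβ (1:ℝ))) : Vec n N) ξ : ℝ) := by
            rw [hDξ, sum_inner]
      _ = ∑ jβ : Fin n × Fin N,
              ξ jβ * (inner ℝ (D (EuclideanSpace.single jβ (1:ℝ))) ξ : ℝ) := by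
            simp only [real_inner_smul_left]
      _ = ∑ jβ : Fin n × Fin N, ∑ iα : Fin n × Fin N,
              ξ jβ * (D (EuclideanSpace.single jβ (1:ℝ)) iα * ξ iα) := by
            refine Finset.sum_congr rfl fun jβ _ => ?_
            rw [inner_eq_sum_prod, Finset.mul_sum]
      _ = ∑ iα : Fin n × Fin N, ∑ jβ : Fin n × Fin N,
              ξ jβ * (D (EuclideanSpace.single jβ (1:ℝ)) iα * ξ iα) := Finset.sum_comm
      _ = ∑ iα : Fin n × Fin N, ∑ jβ : Fin n × Fin N,
              dA A η iα.1 iα.2 jβ.1 jβ.2 * ξ iα * ξ jβ := by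
            refine Finset.sum_congr rfl fun iα _ => Finset.sum_congr rfl fun jβ _ => ?_
            have : D (EuclideanSpace.single jβ (1:ℝ)) iα = dA A η iα.1 iα.2 jβ.1 jβ.2 := by
              rw [hD]; rfl
            rw [this]; ring
    rw [step1]
    simp only [Fintype.sum_prod_type]
    exact Finset.sum_congr rfl fun i _ => Finset.sum_comm
  rw [expand]
  exact hA.ellipticity η ξ

lemma aux_lower {n N : ℕ} {p q m M : ℝ} (hm : 0 < m)
    (A : Vec n N → Vec n N) (hA : EllipticGrowth n N p q m M A) (ξ : Vec n N) :
    (inner ℝ (A 0) ξ : ℝ) + m * ‖ξ‖ ^ 2 * min ((1 + ‖ξ‖ ^ 2) ^ ((p - 2) / 2)) 1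
      ≤ (inner ℝ (A ξ) ξ : ℝ) := by
  set K : ℝ := min ((1 + ‖ξ‖ ^ 2) ^ ((p - 2) / 2)) 1 with hK
  set C : ℝ := m * ‖ξ‖ ^ 2 * K with hCdef
  set g : ℝ → ℝ := fun t => (inner ℝ (A (t • ξ)) ξ : ℝ) with hgdef
  have hg : ∀ t : ℝ, HasDerivAt g (inner ℝ ((fderiv ℝ A (t • ξ)) ξ) ξ : ℝ) t := by
    intro t
    have h1 : HasDerivAt (fun t : ℝ => t • ξ) ξ t := by
      simpa using (hasDerivAt_id t).smul_const ξ
    have h2 : HasDerivAt (fun t : ℝ => A (t • ξ)) ((fderiv ℝ A (t • ξ)) ξ) t :=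
      (hA.differentiable (t • ξ)).hasFDerivAt.comp_hasDerivAt t h1
    have h3 := h2.inner ℝ (hasDerivAt_const t ξ)
    simpa using h3
  have hKpos : 0 < K := by
    have : (0:ℝ) < (1 + ‖ξ‖ ^ 2) ^ ((p - 2) / 2) :=
      Real.rpow_pos_of_pos (by positivity) _
    exact lt_min this one_pos
  have hC : ∀ t : ℝ, t ∈ Set.Icc (0:ℝ) 1 →
      C ≤ (inner ℝ ((fderiv ℝ A (t • ξ)) ξ) ξ : ℝ) := by
    intro t ht
    refine le_trans ?_ (aux_core A hA (t • ξ) ξ)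
    have hbase : 1 + ‖t • ξ‖ ^ 2 ≤ 1 + ‖ξ‖ ^ 2 := by
      have : ‖t • ξ‖ = |t| * ‖ξ‖ := by simp [norm_smul]
      rw [this]
      have h1 : |t| ≤ 1 := abs_le.mpr ⟨by linarith [ht.1], ht.2⟩
      have h2 : |t| * ‖ξ‖ ≤ ‖ξ‖ := by nlinarith [norm_nonneg ξ]
      have h3 : (|t| * ‖ξ‖) ^ 2 ≤ ‖ξ‖ ^ 2 :=
        pow_le_pow_left₀ (by positivity) h2 2
      linarith
    have hbase0 : (0:ℝ) < 1 + ‖t • ξ‖ ^ 2 := by positivity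
    have hmin : K ≤ (1 + ‖t • ξ‖ ^ 2) ^ ((p - 2) / 2) := by
      rcases le_or_gt p 2 with hp2 | hp2
      · refine le_trans (min_le_left _ _) ?_
        exact Real.rpow_le_rpow_of_nonpos hbase0 hbase (by linarith)
      · refine le_trans (min_le_right _ _) ?_
        have : (1:ℝ) ≤ 1 + ‖t • ξ‖ ^ 2 := by nlinarith [sq_nonneg ‖t • ξ‖]
        calc (1:ℝ) = (1 + ‖t • ξ‖ ^ 2) ^ (0:ℝ) := by rw [Real.rpow_zero]
        _ ≤ (1 + ‖t • ξ‖ ^ 2) ^ ((p - 2) / 2) :=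
          Real.rpow_le_rpow_of_exponent_le this (by linarith)
    calc C = m * K * ‖ξ‖ ^ 2 := by ring
    _ ≤ m * (1 + ‖t • ξ‖ ^ 2) ^ ((p - 2) / 2) * ‖ξ‖ ^ 2 :=
        mul_le_mul_of_nonneg_right (mul_le_mul_of_nonneg_left hmin hm.le) (sq_nonneg ‖ξ‖)
  have hgdiff : Differentiable ℝ g := fun t => (hg t).differentiableAt
  set f : ℝ → ℝ := fun t => C * t - g t with hfdef
  have hfd : Differentiable ℝ f := by
    apply Differentiable.sub _ hgdiff
    exact (differentiable_id.const_mul C)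
  have hanti : AntitoneOn f (Set.Icc (0:ℝ) 1) := by
    apply antitoneOn_of_deriv_nonpos (convex_Icc 0 1) hfd.continuous.continuousOn
      hfd.differentiableOn
    intro x hx
    rw [interior_Icc] at hx
    have hdf : deriv f x = C - (inner ℝ ((fderiv ℝ A (x • ξ)) ξ) ξ : ℝ) := by
      have : HasDerivAt f (C * 1 - (inner ℝ ((fderiv ℝ A (x • ξ)) ξ) ξ : ℝ)) x :=
        ((hasDerivAt_id x).const_mul C).sub (hg x)
      simpa using this.deriv
    rw [hdf]
    have := hC x ⟨le_of_lt hx.1, le_of_lt hx.2⟩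
    linarith
  have h01 := hanti (Set.mem_Icc.mpr ⟨le_refl 0, zero_le_one⟩)
    (Set.mem_Icc.mpr ⟨zero_le_one, le_refl 1⟩) zero_le_one
  have hg0 : g 0 = (inner ℝ (A 0) ξ : ℝ) := by simp [hgdef]
  have hg1 : g 1 = (inner ℝ (A ξ) ξ : ℝ) := by simp [hgdef]
  simp only [hfdef] at h01
  rw [hg0, hg1] at h01
  linarith [h01]

lemma aux_arith {p m c : ℝ} (hp : 1 < p) (hm : 0 < m) (hc : 0 ≤ c) :
    ∃ lam > 0, ∀ r : ℝ, 0 ≤ r →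
      c * r ≤ m * r ^ 2 * min ((1 + r ^ 2) ^ ((p - 2) / 2)) 1 + lam := by
  set t : ℝ := min p 2 with ht
  have ht1 : 1 < t := lt_min hp one_lt_two
  have hκ : (0:ℝ) < m / 2 := by linarith
  set κ : ℝ := m / 2 with hκdef
  set R : ℝ := (c / κ + 1) ^ (1 / (t - 1)) with hR
  have hcκ : 0 ≤ c / κ := div_nonneg hc (le_of_lt hκ)
  have hR1 : (1:ℝ) ≤ R := by
    rw [hR]
    exact Real.one_le_rpow (by linarith) (le_of_lt (div_pos one_pos (by linarith)))
  -- Step A : κ * r ^ t ≤ m * r^2 * K r + m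
  have stepA : ∀ r : ℝ, 0 ≤ r →
      κ * r ^ t ≤ m * r ^ 2 * min ((1 + r ^ 2) ^ ((p - 2) / 2)) 1 + m := by
    intro r hr
    set K : ℝ := min ((1 + r ^ 2) ^ ((p - 2) / 2)) 1 with hKd
    have hKpos : (0:ℝ) < K := by
      have : (0:ℝ) < (1 + r ^ 2) ^ ((p - 2) / 2) :=
        Real.rpow_pos_of_pos (by positivity) _
      exact lt_min this one_pos
    have hK0 : 0 ≤ m * r ^ 2 * K :=
      mul_nonneg (mul_nonneg hm.le (sq_nonneg r)) hKpos.le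
    rcases le_or_gt r 1 with hr1 | hr1
    · have h1 : r ^ t ≤ 1 := Real.rpow_le_one hr hr1 (by linarith)
      have h2 : 0 ≤ r ^ t := Real.rpow_nonneg hr t
      nlinarith
    · have hr0 : (0:ℝ) < r := by linarith
      rcases le_or_gt p 2 with hp2 | hp2
      · -- t = p, use K ≥ (1/2) * r^(p-2)
        have htp : t = p := min_eq_left hp2
        have hb1 : 1 + r ^ 2 ≤ 2 * r ^ 2 := by nlinarith
        have hb0 : (0:ℝ) < 1 + r ^ 2 := by positivity
        have h1 : (2 * r ^ 2) ^ ((p - 2) / 2) ≤ (1 + r ^ 2) ^ ((p - 2) / 2) :=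
          Real.rpow_le_rpow_of_nonpos hb0 hb1 (by linarith)
        have h2 : (2 * r ^ 2) ^ ((p - 2) / 2)
            = (2:ℝ) ^ ((p - 2) / 2) * r ^ (p - 2) := by
          rw [Real.mul_rpow (by norm_num) (sq_nonneg r)]
          congr 1
          rw [← Real.rpow_natCast r 2, ← Real.rpow_mul hr]
          congr 1
          ring
        have h3 : (1/2 : ℝ) ≤ (2:ℝ) ^ ((p - 2) / 2) := by
          have : (2:ℝ) ^ (-1 : ℝ) ≤ (2:ℝ) ^ ((p - 2) / 2) :=
            Real.rpow_le_rpow_of_exponent_le one_le_two (by linarith)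
          rw [Real.rpow_neg_one] at this
          linarith
        have h4 : (1/2 : ℝ) * r ^ (p - 2) ≤ (1 + r ^ 2) ^ ((p - 2) / 2) := by
          have hrp : 0 ≤ r ^ (p - 2) := Real.rpow_nonneg hr _
          nlinarith
        have h5 : (1/2 : ℝ) * r ^ (p - 2) ≤ K := by
          rw [hKd]
          apply le_min h4
          have : r ^ (p - 2) ≤ 1 := by
            calc r ^ (p - 2) ≤ r ^ (0:ℝ) :=
                  Real.rpow_le_rpow_of_exponent_le hr1.le (by linarith)
            _ = 1 := Real.rpow_zero r
          linarith [Real.rpow_nonneg hr (p-2)]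
        have h6 : r ^ t = r ^ (p - 2) * r ^ 2 := by
          rw [htp, ← Real.rpow_natCast r 2, ← Real.rpow_add hr0]
          congr 1
          push_cast
          ring
        rw [h6]
        have : κ * (r ^ (p - 2) * r ^ 2) = (1/2 : ℝ) * r ^ (p-2) * (m * r ^ 2) := by
          rw [hκdef]; ring
        rw [this]
        have hmr2 : 0 ≤ m * r ^ 2 := mul_nonneg hm.le (sq_nonneg r)
        nlinarith
      · -- p > 2 : t = 2, K = 1
        have htp : t = 2 := min_eq_right (by linarith)
        have hK1 : K = 1 := by
          rw [hKd]
          apply min_eq_right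
          calc (1:ℝ) = (1 + r ^ 2) ^ (0:ℝ) := (Real.rpow_zero _).symm
          _ ≤ (1 + r ^ 2) ^ ((p - 2) / 2) :=
            Real.rpow_le_rpow_of_exponent_le (by nlinarith) (by linarith)
        have h6 : r ^ t = r ^ 2 := by
          rw [htp, ← Real.rpow_natCast r 2]
          norm_num
        rw [h6, hK1]
        nlinarith [sq_nonneg r]
  -- Step B : c * r ≤ κ * r ^ t + c * R
  have stepB : ∀ r : ℝ, 0 ≤ r → c * r ≤ κ * r ^ t + c * R := by
    intro r hr
    rcases le_or_gt r R with hrR | hrR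
    · have : 0 ≤ κ * r ^ t := mul_nonneg hκ.le (Real.rpow_nonneg hr t)
      nlinarith
    · have hR0 : (0:ℝ) < R := by linarith
      have hr0 : (0:ℝ) < r := by linarith
      have hRt : R ^ (t - 1) = c / κ + 1 := by
        rw [hR, ← Real.rpow_mul (by positivity), one_div,
          inv_mul_cancel₀ (ne_of_gt (by linarith : (0:ℝ) < t - 1)), Real.rpow_one]
      have h1 : R ^ (t - 1) ≤ r ^ (t - 1) :=
        Real.rpow_le_rpow hR0.le hrR.le (by linarith)
      have h2 : c ≤ κ * r ^ (t - 1) := by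
        rw [hRt] at h1
        have : c / κ ≤ r ^ (t - 1) := by linarith
        calc c = κ * (c / κ) := by field_simp
        _ ≤ κ * r ^ (t - 1) := by nlinarith
      have h3 : r ^ t = r ^ (t - 1) * r := by
        have h := Real.rpow_add hr0 (t - 1) 1
        rw [sub_add_cancel, Real.rpow_one] at h
        exact h
      calc c * r ≤ κ * r ^ (t - 1) * r := by nlinarith
      _ = κ * r ^ t := by rw [h3]; ring
      _ ≤ κ * r ^ t + c * R := by nlinarith [mul_nonneg hc hR0.le]
  refine ⟨m + c * R + 1, by positivity, fun r hr => ?_⟩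
  have := stepA r hr
  have := stepB r hr
  linarith

/-- Coercivity of the perturbed operator A_ε, uniformly in ε ∈ (0,1). -/
theorem statement11 {n N : ℕ} (hn : 1 ≤ n) (hN : 1 ≤ N) {p q m M : ℝ}
    (hp : 1 < p) (hpq : p ≤ q) (hm : 0 < m) (hM : 0 < M)
    (A : Vec n N → Vec n N) (hA : EllipticGrowth n N p q m M A) :
    ∃ lam > 0, ∀ ε ∈ Set.Ioo (0 : ℝ) 1, ∀ ξ : Vec n N,
      ε * ‖ξ‖ ^ max q 2 - lam ≤
        ∑ i : Fin n, ∑ α : Fin N, Aeps q ε A ξ (i, α) * ξ (i, α) := by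
  obtain ⟨lam0, hlam0, hbound⟩ := aux_arith (c := ‖A 0‖) hp hm (norm_nonneg (A 0))
  refine ⟨lam0, hlam0, fun ε hε ξ => ?_⟩
  set s : ℝ := max q 2 with hs
  have hs2 : (2:ℝ) ≤ s := le_max_right q 2
  set r : ℝ := ‖ξ‖ with hr
  have hr0 : 0 ≤ r := norm_nonneg ξ
  have hsplit : ∑ i : Fin n, ∑ α : Fin N, Aeps q ε A ξ (i, α) * ξ (i, α)
      = (inner ℝ (A ξ) ξ : ℝ) + ε * (1 + r ^ 2) ^ ((s - 2) / 2) * r ^ 2 := by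
    have h1 : ∀ iα : Fin n × Fin N, Aeps q ε A ξ iα
        = A ξ iα + (ε * (1 + r ^ 2) ^ ((s - 2) / 2)) * ξ iα := fun iα => rfl
    have h2 : ∑ i : Fin n, ∑ α : Fin N, ξ (i, α) * ξ (i, α) = r ^ 2 := by
      rw [sum_sum_eq_inner, real_inner_self_eq_norm_sq]
    calc ∑ i : Fin n, ∑ α : Fin N, Aeps q ε A ξ (i, α) * ξ (i, α)
        = ∑ i : Fin n, ∑ α : Fin N, (A ξ (i, α) * ξ (i, α)
            + ε * (1 + r ^ 2) ^ ((s - 2) / 2) * (ξ (i, α) * ξ (i, α))) := by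
          refine Finset.sum_congr rfl fun i _ => Finset.sum_congr rfl fun α _ => ?_
          rw [h1]; ring
    _ = (∑ i : Fin n, ∑ α : Fin N, A ξ (i, α) * ξ (i, α))
          + ε * (1 + r ^ 2) ^ ((s - 2) / 2)
            * ∑ i : Fin n, ∑ α : Fin N, ξ (i, α) * ξ (i, α) := by
          simp only [Finset.sum_add_distrib, Finset.mul_sum]
    _ = (inner ℝ (A ξ) ξ : ℝ) + ε * (1 + r ^ 2) ^ ((s - 2) / 2) * r ^ 2 := by
          rw [sum_sum_eq_inner, h2]
  rw [hsplit]
  have hA1 := aux_lower hm A hA ξ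
  have hA0 : -(‖A 0‖ * r) ≤ (inner ℝ (A 0) ξ : ℝ) := by
    have h := abs_real_inner_le_norm (A 0) ξ
    have h2 := neg_abs_le (inner ℝ (A 0) ξ : ℝ)
    rw [hr]
    linarith
  have hεs : ε * r ^ s ≤ ε * (1 + r ^ 2) ^ ((s - 2) / 2) * r ^ 2 := by
    have hεpos : 0 < ε := hε.1
    rcases eq_or_lt_of_le hr0 with h0 | h0
    · rw [← h0, Real.zero_rpow (by linarith : s ≠ 0)]
      simp
    · have e1 : r ^ s = r ^ (s - 2) * r ^ 2 := by
        rw [← Real.rpow_natCast r 2, ← Real.rpow_add h0]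
        norm_num
      have e2 : r ^ (s - 2) = (r ^ 2) ^ ((s - 2) / 2) := by
        rw [← Real.rpow_natCast r 2, ← Real.rpow_mul h0.le]
        congr 1
        push_cast
        ring
      have e3 : (r ^ 2) ^ ((s - 2) / 2) ≤ (1 + r ^ 2) ^ ((s - 2) / 2) :=
        Real.rpow_le_rpow (sq_nonneg r) (by linarith) (by linarith)
      have e4 : r ^ (s - 2) ≤ (1 + r ^ 2) ^ ((s - 2) / 2) := by rw [e2]; exact e3
      rw [e1]
      linarith [mul_le_mul_of_nonneg_right
        (mul_le_mul_of_nonneg_left e4 hεpos.le) (sq_nonneg r)]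
  have hb := hbound r hr0
  rw [← hr] at hA1
  linarith
end
end

section
/- Let q > 1 and set m′ := max{q, 2}. Let Ω ⊂ ℝⁿ be open, u : Ω → ℝ^N twice continuously differentiable, and τ : ℝⁿ → ℝ smooth. Then there exists a constant C > 0, depending only on n, N and q, such that at every point x ∈ Ω one has Σ_{i,k=1}^n Σ_{α=1}^N ∂/∂x_k [ (1+|Du|²)^{(m′−2)/2} ∂u^α/∂x_i ] · ∂/∂x_i [ (∂u^α/∂x_k) τ² ] ≥ − C (1+|Du|²)^{m′/2} |Dτ|². -/
open MeasureTheory Real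

noncomputable section

section Aux

lemma absle17 (X Y : ℝ) (hX : 0 ≤ X) (h : Y^2 ≤ X^2) : -X ≤ Y := by nlinarith [sq_nonneg (X+Y)]

lemma partb17 (t d s P m2 : ℝ) (hP : 0 ≤ P) (hm2 : 0 ≤ m2) (hs : s^2 ≤ P * m2) :
    0 ≤ t^2*m2 + 2*t*d*s + P*d^2 := by
  have h1 : -(t^2*m2 + P*d^2) ≤ 2*t*d*s := by
    apply absle17 _ _ (by positivity)
    nlinarith [sq_nonneg (t^2*m2 - P*d^2), mul_nonneg (mul_nonneg (sq_nonneg t) (sq_nonneg d)) (sub_nonneg.2 hs)]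
  linarith

lemma perk17 (gx cg t s cc d P m2 : ℝ) (hgx : 0 ≤ gx) (hcg : 0 ≤ cg)
    (hP : 0 ≤ P) (hm2 : 0 ≤ m2) (hs : s^2 ≤ P * m2) :
    -(2*cg*cc^2 + gx*P*d^2) ≤ gx*t^2*m2 + 2*cg*t^2*s^2 + 4*cg*t*s*cc + 2*gx*t*d*s := by
  have h1 := mul_nonneg hcg (sq_nonneg (t*s + cc))
  have h2 := mul_nonneg hgx (partb17 t d s P m2 hP hm2 hs)
  nlinarith

lemma algebra_bound17 {n N : ℕ} (gx cg t : ℝ) (hgx : 0 ≤ gx) (hcg : 0 ≤ cg)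
    (p : Fin n × Fin N → ℝ) (M : Fin n → Fin n × Fin N → ℝ)
    (hsym : ∀ i k α, M k (i,α) = M i (k,α)) (d : Fin n → ℝ)
    (s : Fin n → ℝ) (hsdef : ∀ k, s k = ∑ j, ∑ β, p (j,β) * M k (j,β)) :
    -((2*cg*(∑ i, ∑ α, p (i,α)^2)^2 + gx*(∑ i, ∑ α, p (i,α)^2)) * (∑ i, d i^2)) ≤
      ∑ i, ∑ k, ∑ α,
        (2*cg*(s k)*p (i,α) + gx * M k (i,α)) *
        (M i (k,α)*t^2 + p (k,α)*(2*t*d i)) := by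
  set P : ℝ := ∑ i, ∑ α, p (i,α)^2 with hP
  set D : ℝ := ∑ i, d i^2 with hD
  set m2 : Fin n → ℝ := fun k => ∑ i, ∑ α, (M k (i,α))^2 with hm2
  set cc : Fin n → ℝ := fun k => ∑ i, ∑ α, p (i,α)*p (k,α)*d i with hcc
  have hPnn : 0 ≤ P := by rw [hP]; positivity
  have hDnn : 0 ≤ D := by rw [hD]; positivity
  rw [Finset.sum_comm]
  have hA : ∀ k, (∑ i, ∑ α, (2*cg*(s k)*p (i,α) + gx*M k (i,α)) * (M i (k,α)*t^2 + p (k,α)*(2*t*d i)))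
      = gx*t^2*(m2 k) + 2*cg*t^2*(s k)^2 + 4*cg*t*(s k)*(cc k)
        + 2*gx*t*(∑ i, ∑ α, M k (i,α)*(p (k,α)*d i)) := by
    intro k
    have h1 : ∀ (i : Fin n) (α : Fin N),
        (2*cg*(s k)*p (i,α) + gx*M k (i,α)) * (M i (k,α)*t^2 + p (k,α)*(2*t*d i))
        = (2*cg*t^2*s k)*(p (i,α)*M k (i,α)) + (4*cg*t*s k)*(p (i,α)*p (k,α)*d i)
          + (gx*t^2)*(M k (i,α))^2 + (2*gx*t)*(M k (i,α)*(p (k,α)*d i)) := by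
      intro i α; rw [hsym i k α]; ring
    simp only [h1, Finset.sum_add_distrib, ← Finset.mul_sum]
    rw [hsdef k, hm2, hcc]
    ring
  have hswap : (∑ k, ∑ i, ∑ α, M k (i,α)*(p (k,α)*d i)) = ∑ k, d k * s k := by
    rw [Finset.sum_comm]
    refine Finset.sum_congr rfl fun i _ => ?_
    have : d i * s i = ∑ k, ∑ α, M k (i,α)*(p (k,α)*d i) := by
      rw [hsdef i]
      simp only [Finset.mul_sum]
      refine Finset.sum_congr rfl fun k _ => Finset.sum_congr rfl fun α _ => ?_
      rw [hsym i k α]; ring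
    exact this.symm
  have hCS : ∀ k, (s k)^2 ≤ P * m2 k := by
    intro k
    have := Finset.sum_mul_sq_le_sq_mul_sq Finset.univ (fun jβ : Fin n × Fin N => p jβ)
      (fun jβ => M k jβ)
    simpa [hsdef k, hm2, hP, Fintype.sum_prod_type] using this
  have hccb : ∑ k, (cc k)^2 ≤ P^2 * D := by
    have h1 : ∀ k, (cc k)^2 ≤ P * ((∑ α, p (k,α)^2) * D) := by
      intro k
      have hcs2 := Finset.sum_mul_sq_le_sq_mul_sq Finset.univ (fun jβ : Fin n × Fin N => p jβ)
        (fun jβ : Fin n × Fin N => p (k, jβ.2) * d jβ.1)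
      have h2 : (∑ jβ : Fin n × Fin N, p jβ * (p (k, jβ.2) * d jβ.1)) = cc k := by
        rw [hcc, Fintype.sum_prod_type]
        exact Finset.sum_congr rfl fun i _ => Finset.sum_congr rfl fun α _ => by ring
      have h3 : (∑ jβ : Fin n × Fin N, (p (k, jβ.2) * d jβ.1)^2) = (∑ α, p (k,α)^2) * D := by
        rw [Fintype.sum_prod_type, Finset.sum_comm, Finset.sum_mul]
        refine Finset.sum_congr rfl fun α _ => ?_
        rw [hD, Finset.mul_sum]
        exact Finset.sum_congr rfl fun i _ => by ring
      have h4 : (∑ jβ : Fin n × Fin N, p jβ ^2) = P := by rw [hP, Fintype.sum_prod_type]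
      calc (cc k)^2 = (∑ jβ : Fin n × Fin N, p jβ * (p (k, jβ.2) * d jβ.1))^2 := by rw [h2]
        _ ≤ P * ((∑ α, p (k,α)^2) * D) := by rw [← h4, ← h3]; exact hcs2
    calc ∑ k, (cc k)^2 ≤ ∑ k, P * ((∑ α, p (k,α)^2) * D) := Finset.sum_le_sum fun k _ => h1 k
      _ = P^2 * D := by
          simp only [← Finset.mul_sum, ← Finset.sum_mul]
          rw [hP]; ring
  have hm2nn : ∀ k, 0 ≤ m2 k := fun k => by rw [hm2]; positivity
  have hperk : ∀ k, -(2*cg*(cc k)^2 + gx*P*(d k)^2) ≤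
      gx*t^2*(m2 k) + 2*cg*t^2*(s k)^2 + 4*cg*t*(s k)*(cc k) + 2*gx*t*(d k * s k) := by
    intro k
    have := perk17 gx cg t (s k) (cc k) (d k) P (m2 k) hgx hcg hPnn (hm2nn k) (hCS k)
    linarith
  have hsum := Finset.sum_le_sum (fun k (_ : k ∈ Finset.univ) => hperk k)
  have hR : (∑ k, (gx*t^2*(m2 k) + 2*cg*t^2*(s k)^2 + 4*cg*t*(s k)*(cc k) + 2*gx*t*(d k * s k)))
      = ∑ k, ∑ i, ∑ α, (2*cg*(s k)*p (i,α) + gx*M k (i,α)) * (M i (k,α)*t^2 + p (k,α)*(2*t*d i)) := by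
    simp only [hA, Finset.sum_add_distrib, ← Finset.mul_sum]
    rw [hswap]
  have hL : (∑ k, -(2*cg*(cc k)^2 + gx*P*(d k)^2))
      = -(2*cg*(∑ k, (cc k)^2) + gx*P*D) := by
    have h5 : ∀ k, -(2*cg*(cc k)^2 + gx*P*(d k)^2) = (-(2*cg))*(cc k)^2 + (-(gx*P))*(d k)^2 :=
      fun k => by ring
    simp only [h5, Finset.sum_add_distrib, ← Finset.mul_sum]
    rw [hD]; ring
  rw [← hR]
  refine le_trans ?_ hsum
  rw [hL]
  have h6 := mul_le_mul_of_nonneg_left hccb (by positivity : (0:ℝ) ≤ 2*cg)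
  nlinarith

def gradCLM17 (n N : ℕ) : (Pt n →L[ℝ] EuclideanSpace ℝ (Fin N)) →L[ℝ] Vec n N :=
  ((PiLp.continuousLinearEquiv 2 ℝ (fun _ : Fin n × Fin N => ℝ)).symm :
      ((Fin n × Fin N) → ℝ) →L[ℝ] Vec n N).comp
    (ContinuousLinearMap.pi fun iα =>
      (EuclideanSpace.proj iα.2).comp
        (ContinuousLinearMap.apply ℝ (EuclideanSpace ℝ (Fin N)) (EuclideanSpace.single iα.1 1)))

lemma grad_eq17 {n N : ℕ} (u : Pt n → EuclideanSpace ℝ (Fin N)) :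
    grad u = fun y => gradCLM17 n N (fderiv ℝ u y) := rfl

end Aux

set_option maxHeartbeats 1000000 in
/-- The pointwise lower bound used in the uniform higher order estimates
(Section 5.2). -/
theorem statement17 {n N : ℕ} (hn : 1 ≤ n) (hN : 1 ≤ N) {q : ℝ} (hq : 1 < q) :
    ∃ C > 0, ∀ (Ω : Set (Pt n)), IsOpen Ω →
      ∀ (u : Pt n → EuclideanSpace ℝ (Fin N)), ContDiffOn ℝ 2 u Ω →
      ∀ (τ : Pt n → ℝ), ContDiff ℝ (⊤ : ℕ∞) τ →
      ∀ x ∈ Ω,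
        -(C * (1 + ‖grad u x‖ ^ 2) ^ (max q 2 / 2) * ‖fderiv ℝ τ x‖ ^ 2) ≤
          ∑ i : Fin n, ∑ k : Fin n, ∑ α : Fin N,
            fderiv ℝ
                (fun y => (1 + ‖grad u y‖ ^ 2) ^ ((max q 2 - 2) / 2) * grad u y (i, α))
                x (EuclideanSpace.single k 1) *
              fderiv ℝ (fun y => grad u y (k, α) * τ y ^ 2) x
                (EuclideanSpace.single i 1) := by
  refine ⟨(n:ℝ) * (max q 2 - 1), by
    have h2 : (2:ℝ) ≤ max q 2 := le_max_right q 2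
    have hn' : (1:ℝ) ≤ (n:ℝ) := by exact_mod_cast hn
    nlinarith, ?_⟩
  intro Ω hΩ u hu τ hτ x hx
  set c : ℝ := (max q 2 - 2) / 2 with hc
  have hcnn : 0 ≤ c := by
    have h2 : (2:ℝ) ≤ max q 2 := le_max_right q 2
    rw [hc]; linarith
  have hu2 : ContDiffAt ℝ 2 u x := hu.contDiffAt (hΩ.mem_nhds hx)
  have hfd1 : ContDiffAt ℝ 1 (fderiv ℝ u) x := hu2.fderiv_right (le_refl 2)
  have hF : HasFDerivAt (fderiv ℝ u) (fderiv ℝ (fderiv ℝ u) x) x :=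
    (hfd1.differentiableAt one_ne_zero).hasFDerivAt
  set F := fderiv ℝ (fderiv ℝ u) x with hFdef
  set B : Pt n →L[ℝ] Vec n N := (gradCLM17 n N).comp F with hBdef
  have hG : HasFDerivAt (grad u) B x := by
    rw [grad_eq17]
    exact ((gradCLM17 n N).hasFDerivAt.comp x hF :)
  set p := grad u x with hpdef
  set fx : ℝ := 1 + ‖p‖^2 with hfx
  have hfxpos : 0 < fx := by positivity
  have hsymF : ∀ v w : Pt n, F v w = F w v := fun v w => (hu2.isSymmSndFDerivAt (by simp [minSmoothness_of_isRCLikeNormedField])) v w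
  have hBsym : ∀ (i k : Fin n) (α : Fin N),
      B (EuclideanSpace.single k 1) (i, α) = B (EuclideanSpace.single i 1) (k, α) := by
    intro i k α
    show F (EuclideanSpace.single k 1) (EuclideanSpace.single i 1) α
      = F (EuclideanSpace.single i 1) (EuclideanSpace.single k 1) α
    rw [hsymF]
  have ht : HasFDerivAt τ (fderiv ℝ τ x) x := (hτ.differentiable (by simp) x).hasFDerivAt
  have hτ2 : HasFDerivAt (fun y => τ y ^ 2) (τ x • fderiv ℝ τ x + τ x • fderiv ℝ τ x) x := by
    have h := ht.mul ht
    have h2 : (fun y => τ y ^ 2) = fun y => τ y * τ y := by funext y; ring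
    rw [h2]; exact h
  have hGc : ∀ (i : Fin n) (α : Fin N), HasFDerivAt (fun y => grad u y (i, α))
      ((EuclideanSpace.proj ((i, α) : Fin n × Fin N)).comp B) x := by
    intro i α
    have h := (EuclideanSpace.proj ((i,α) : Fin n × Fin N)).hasFDerivAt.comp x hG
    exact h
  have hval2 : ∀ (i k : Fin n) (α : Fin N),
      fderiv ℝ (fun y => grad u y (k, α) * τ y ^ 2) x (EuclideanSpace.single i 1)
        = B (EuclideanSpace.single i 1) (k,α) * (τ x)^2
          + p (k,α) * (2 * τ x * fderiv ℝ τ x (EuclideanSpace.single i 1)) := by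
    intro i k α
    rw [(show HasFDerivAt (fun y => grad u y (k, α) * τ y ^ 2) _ x from (hGc k α).mul hτ2).fderiv]
    simp [ContinuousLinearMap.smul_apply, ContinuousLinearMap.add_apply, hpdef]
    ring
  have hnorm : HasFDerivAt (fun y => 1 + ‖grad u y‖^2)
      ((fderivInnerCLM ℝ ((p : Vec n N), (p : Vec n N))).comp (B.prod B)) x := by
    have h1 : HasFDerivAt (fun y => (inner ℝ (grad u y) (grad u y) : ℝ))
        ((fderivInnerCLM ℝ ((p : Vec n N), (p : Vec n N))).comp (B.prod B)) x := hG.inner ℝ hG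
    have h2 : (fun y => 1 + ‖grad u y‖^2) = fun y => 1 + (inner ℝ (grad u y) (grad u y) : ℝ) := by
      funext y; rw [real_inner_self_eq_norm_sq]
    rw [h2]; exact h1.const_add 1
  have hrpow : HasFDerivAt (fun y => (1 + ‖grad u y‖^2) ^ c)
      ((c * fx ^ (c-1)) • ((fderivInnerCLM ℝ ((p : Vec n N), (p : Vec n N))).comp (B.prod B))) x := by
    have := hnorm.rpow_const (p := c) (Or.inl (ne_of_gt hfxpos))
    exact this
  have hval1 : ∀ (i k : Fin n) (α : Fin N),
      fderiv ℝ (fun y => (1 + ‖grad u y‖^2) ^ c * grad u y (i, α)) x (EuclideanSpace.single k 1)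
        = fx ^ c * B (EuclideanSpace.single k 1) (i,α)
          + p (i,α) * ((c * fx ^ (c-1)) *
              (2 * ∑ jβ : Fin n × Fin N, p jβ * B (EuclideanSpace.single k 1) jβ)) := by
    intro i k α
    rw [(show HasFDerivAt (fun y => (1 + ‖grad u y‖^2) ^ c * grad u y (i, α)) _ x from hrpow.mul (hGc i α)).fderiv]
    simp only [ContinuousLinearMap.add_apply, ContinuousLinearMap.smul_apply,
      ContinuousLinearMap.comp_apply, ContinuousLinearMap.prod_apply, fderivInnerCLM_apply,
      PiLp.proj_apply, smul_eq_mul]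
    have hre : (inner ℝ (p : Vec n N) (B (EuclideanSpace.single k 1)) : ℝ)
        = ∑ jβ : Fin n × Fin N, p jβ * B (EuclideanSpace.single k 1) jβ := by
      simp [PiLp.inner_apply, RCLike.inner_apply, mul_comm]
    have hre2 : (inner ℝ (B (EuclideanSpace.single k 1)) (p : Vec n N) : ℝ)
        = ∑ jβ : Fin n × Fin N, p jβ * B (EuclideanSpace.single k 1) jβ := by
      rw [real_inner_comm]; exact hre
    simp only [hre, hre2]
    show (1 + ‖p‖^2) ^ c * _ + p (i,α) * _ = _
    ring
  -- abbreviations for the algebraic step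
  set gx : ℝ := fx ^ c with hgx
  set cg : ℝ := c * fx ^ (c-1) with hcg
  set t : ℝ := τ x with htt
  set M : Fin n → Fin n × Fin N → ℝ :=
    fun k jβ => B (EuclideanSpace.single k 1) jβ with hM
  set d : Fin n → ℝ := fun i => fderiv ℝ τ x (EuclideanSpace.single i 1) with hd
  set pf : Fin n × Fin N → ℝ := fun jβ => p jβ with hpf
  set sfun : Fin n → ℝ := fun k => ∑ j, ∑ β, pf (j,β) * M k (j,β) with hsfun
  have hgxnn : 0 ≤ gx := le_of_lt (Real.rpow_pos_of_pos hfxpos c)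
  have hcgnn : 0 ≤ cg := mul_nonneg hcnn (le_of_lt (Real.rpow_pos_of_pos hfxpos _))
  -- rewrite the goal sum
  have hrw : (∑ i : Fin n, ∑ k : Fin n, ∑ α : Fin N,
      fderiv ℝ (fun y => (1 + ‖grad u y‖ ^ 2) ^ c * grad u y (i, α)) x (EuclideanSpace.single k 1) *
        fderiv ℝ (fun y => grad u y (k, α) * τ y ^ 2) x (EuclideanSpace.single i 1))
      = ∑ i, ∑ k, ∑ α,
          (2*cg*(sfun k)*pf (i,α) + gx * M k (i,α)) *
          (M i (k,α)*t^2 + pf (k,α)*(2*t*d i)) := by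
    refine Finset.sum_congr rfl fun i _ => Finset.sum_congr rfl fun k _ =>
      Finset.sum_congr rfl fun α _ => ?_
    rw [hval1 i k α, hval2 i k α]
    have hsk : sfun k = ∑ jβ : Fin n × Fin N, p jβ * B (EuclideanSpace.single k 1) jβ := by
      rw [hsfun]
      simp only [hpf, hM]
      rw [Fintype.sum_prod_type]
    rw [hsk]
    show (fx ^ c * M k (i,α) + pf (i,α) * (cg * (2 * _))) * (M i (k,α) * t^2 + pf (k,α) * (2*t*d i)) = _
    rw [hgx]
    ring
  rw [hrw]
  -- apply the algebraic bound
  have halg := algebra_bound17 gx cg t hgxnn hcgnn pf M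
    (fun i k α => hBsym i k α) d sfun (fun k => rfl)
  refine le_trans ?_ halg
  -- constants
  set P : ℝ := ∑ i, ∑ α, pf (i,α)^2 with hP
  have hPval : P = ‖p‖^2 := by
    have h0 : ‖p‖^2 = ∑ jβ : Fin n × Fin N, p jβ ^2 := by
      rw [EuclideanSpace.norm_eq, Real.sq_sqrt (by positivity)]
      exact Finset.sum_congr rfl fun jβ _ => by simp [Real.norm_eq_abs, sq_abs]
    rw [h0, Fintype.sum_prod_type, hP]
  have hPnn : 0 ≤ P := by rw [hP]; positivity
  have hPle : P ≤ fx := by rw [hPval, hfx]; linarith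
  have hDle : (∑ i, d i ^ 2) ≤ (n:ℝ) * ‖fderiv ℝ τ x‖^2 := by
    have h1 : ∀ i : Fin n, d i ^ 2 ≤ ‖fderiv ℝ τ x‖^2 := by
      intro i
      have h2 : |d i| ≤ ‖fderiv ℝ τ x‖ := by
        have h3 := (fderiv ℝ τ x).le_opNorm (EuclideanSpace.single i (1:ℝ))
        rw [EuclideanSpace.norm_single] at h3
        simpa [hd] using h3
      calc d i ^2 = |d i|^2 := (sq_abs _).symm
        _ ≤ ‖fderiv ℝ τ x‖^2 := by
            apply pow_le_pow_left₀ (abs_nonneg _) h2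
    calc (∑ i, d i ^ 2) ≤ ∑ _i : Fin n, ‖fderiv ℝ τ x‖^2 :=
          Finset.sum_le_sum fun i _ => h1 i
      _ = (n:ℝ) * ‖fderiv ℝ τ x‖^2 := by
          rw [Finset.sum_const, Finset.card_univ, Fintype.card_fin, nsmul_eq_mul]
  have hDnn : 0 ≤ ∑ i, d i ^2 := by positivity
  have hApos : (0:ℝ) < fx ^ (c-1) := Real.rpow_pos_of_pos hfxpos _
  have e1 : fx^(c+1) = fx^(c-1) * fx * fx := by
    rw [show c+1 = c-1+1+1 by ring, Real.rpow_add hfxpos, Real.rpow_add hfxpos, Real.rpow_one]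
  have hcoef : 2*cg*P^2 + gx*P ≤ (2*c+1) * fx^(c+1) := by
    have h1 : cg * P^2 ≤ c * fx^(c+1) := by
      have ha : P*P ≤ fx*fx := mul_self_le_mul_self hPnn hPle
      have hb := mul_le_mul_of_nonneg_left ha (mul_nonneg hcnn hApos.le)
      calc cg*P^2 = c*fx^(c-1)*(P*P) := by rw [hcg]; ring
        _ ≤ c*fx^(c-1)*(fx*fx) := hb
        _ = c * fx^(c+1) := by rw [e1]; ring
    have h2 : gx * P ≤ fx^(c+1) := by
      have hsplit2 : fx ^ (c+1) = fx ^ c * fx := by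
        rw [Real.rpow_add hfxpos, Real.rpow_one]
      rw [hgx, hsplit2]
      exact mul_le_mul_of_nonneg_left hPle (le_of_lt (Real.rpow_pos_of_pos hfxpos c))
    linarith
  have hfxc1 : (0:ℝ) < fx ^ (c+1) := Real.rpow_pos_of_pos hfxpos _
  have hmc : max q 2 / 2 = c + 1 := by rw [hc]; ring
  rw [hmc]
  apply neg_le_neg
  calc (2*cg*P^2 + gx*P) * (∑ i, d i^2)
      ≤ ((2*c+1) * fx^(c+1)) * ((n:ℝ) * ‖fderiv ℝ τ x‖^2) := by
        apply mul_le_mul hcoef hDle hDnn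
        positivity
    _ = (n:ℝ) * (max q 2 - 1) * fx^(c+1) * ‖fderiv ℝ τ x‖^2 := by
        rw [hc]; ring
end
end
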